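/- Given any instance Nim−F of CIS-Nim, let π(n) be the number of P-positions {x,y,z} (unordered) with x, y, z all less than n. Then there exists a constant c > 0 such that π(n) ≥ (n − |F|)²/24 for all n > |F|. Consequently, any limit of π(n·2^k)/(n·2^k)² along k → ∞ is at least 1/24 > 0. -/

import Mathlib

open Filter

/-- A move in Nim: strictly decrease one heap. -/
def NimMove (a b : Multiset ℕ) : Prop :=
  ∃ x y, x ∈ a ∧ y < x ∧ b = y ::ₘ a.erase x

theorem NimMove.sum_lt {a b : Multiset ℕ} (h : NimMove a b) : b.sum < a.sum := by
  obtain ⟨x, y, hx, hyx, rfl⟩ := h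
  have hc : x ::ₘ a.erase x = a := Multiset.cons_erase hx
  have h1 : (y ::ₘ a.erase x).sum = y + (a.erase x).sum := Multiset.sum_cons y _
  have h2 : a.sum = x + (a.erase x).sum := by
    conv_lhs => rw [← hc]
    exact Multiset.sum_cons x _
  omega

/-- P-positions of Nim minus a forbidden finite set `F`, by the standard recursion:
a position is P iff every child not in `F` is an N-position. -/
def NimP (F : Finset (Multiset ℕ)) (a : Multiset ℕ) : Prop :=
  ∀ b, NimMove a b → b ∉ F → ¬ NimP F b
termination_by a.sum
decreasing_by exact NimMove.sum_lt (by assumption)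

/-- A P-position of Nim−F : a valid position (not forbidden) which is P. -/
def PPos (F : Finset (Multiset ℕ)) (a : Multiset ℕ) : Prop :=
  a ∉ F ∧ NimP F a

/-- Largest heap size appearing in any forbidden position. -/
def Fmax (F : Finset (Multiset ℕ)) : ℕ := F.sup Multiset.sup

/-- The set S of pairs (x,y) such that there is z with z < y < x and {x,y,z} a P-position. -/
def Sset (F : Finset (Multiset ℕ)) : Set (ℕ × ℕ) :=
  {p | ∃ z, z < p.2 ∧ p.2 < p.1 ∧ PPos F {p.1, p.2, z}}

/-- r(x,y): number of elements of S of the form (x',y) with x' ≥ x. -/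
noncomputable def rdef (F : Finset (Multiset ℕ)) (x y : ℕ) : ℕ :=
  {x' | x ≤ x' ∧ (x', y) ∈ Sset F}.ncard

/-- b(x,y): number of elements of S of the form (x,y') with y' ≤ y. -/
noncomputable def bdef (F : Finset (Multiset ℕ)) (x y : ℕ) : ℕ :=
  {y' | y' ≤ y ∧ (x, y') ∈ Sset F}.ncard

/-- U_{x,y} = A ∪ B ∪ C ∪ D. -/
def Uset (F : Finset (Multiset ℕ)) (x y : ℕ) : Set (ℕ × ℕ) :=
  {p | (p.2 < p.1 ∧ p.1 ≤ x ∧ bdef F p.1 p.1 ≥ p.1 - p.2) ∨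
       (p.1 = x ∧ p.2 < y ∧ bdef F x (y - 1) ≥ y - p.2) ∨
       (y ≤ p.2 ∧ p.2 < x ∧ x ≤ p.1 ∧ rdef F x p.2 > p.1 - x) ∨
       (p.2 < y ∧ y ≤ x ∧ x < p.1 ∧ rdef F (x + 1) p.2 > p.1 - (x + 1))}

/-- Ū_{x,y}: agrees with U_{x,y} for second coordinate < x, and for y' ≥ x contains
(x',y') iff y' < x' ≤ 2y' and (y', ⌊x'/2⌋) ∉ Ū_{x,y}. -/
def Ubar (F : Finset (Multiset ℕ)) (x y : ℕ) (p : ℕ × ℕ) : Prop :=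
  if p.2 < x then p ∈ Uset F x y
  else if h : p.2 < p.1 then p.1 ≤ 2 * p.2 ∧ ¬ Ubar F x y (p.2, p.1 / 2)
  else False
termination_by p.1
decreasing_by exact h

/-- S_n = Ū_{n,0}. -/
def Sn (F : Finset (Multiset ℕ)) (n : ℕ) : Set (ℕ × ℕ) := {p | Ubar F n 0 p}

/-- R_n = {(x,y) : y < n ≤ x ≤ 2y}. -/
def Rn (n : ℕ) : Set (ℕ × ℕ) := {p | p.2 < n ∧ n ≤ p.1 ∧ p.1 ≤ 2 * p.2}

/-- h(m,n) = |R_n ∩ S_m|. -/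
noncomputable def hdef (F : Finset (Multiset ℕ)) (m n : ℕ) : ℕ := (Rn n ∩ Sn F m).ncard

/-- π(n): number of P-positions (unordered multisets) with all entries < n. -/
noncomputable def piNim (F : Finset (Multiset ℕ)) (n : ℕ) : ℕ :=
  {s : Multiset ℕ | s.card = 3 ∧ (∀ a ∈ s, a < n) ∧ PPos F s}.ncard

/-!
For every position `s` there is exactly one `x` making `x ::ₘ s` a P-position of Nim−F, and
`x ≤ s.sum + |F|`. Uniqueness: two such `x` would be P-positions one move apart. Existence: if
every non-forbidden `x ::ₘ s` with `x ≤ s.sum + |F|` (at least `s.sum + 1` of them) were an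
N-position, its winning move would have to go to some `x ::ₘ t` with `t` an option of `s`; by
uniqueness the map `x ↦ t` is injective, but `s` has at most `s.sum` options.

Applied to `s = {y, z}` with `y, z < m` and `2m + |F| ≤ n + 1`, this yields `m²` ordered pairs,
each completed to a P-position with entries below `n`; every P-position arises from at most
`3 · 2 = 6` such pairs, so `m² ≤ 6 π(n)`.
-/

open Filter Topology Finset

lemma nimP_iff (F : Finset (Multiset ℕ)) (a : Multiset ℕ) :
    NimP F a ↔ ∀ b, NimMove a b → b ∉ F → ¬ NimP F b := by
  rw [NimP]

namespace NimMove

lemma cons_of_lt {x w : ℕ} (s : Multiset ℕ) (h : w < x) : NimMove (x ::ₘ s) (w ::ₘ s) :=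
  ⟨x, w, Multiset.mem_cons_self x s, h, by rw [Multiset.erase_cons_head]⟩

lemma of_cons {x : ℕ} {s b : Multiset ℕ} (h : NimMove (x ::ₘ s) b) :
    (∃ w < x, b = w ::ₘ s) ∨ ∃ t, NimMove s t ∧ b = x ::ₘ t := by
  obtain ⟨u, v, hu, hvu, rfl⟩ := h
  by_cases hux : u = x
  · subst hux
    exact Or.inl ⟨v, hvu, by rw [Multiset.erase_cons_head]⟩
  · refine Or.inr ⟨v ::ₘ s.erase u, ⟨u, v, (Multiset.mem_cons.1 hu).resolve_left hux, hvu, rfl⟩, ?_⟩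
    rw [Multiset.erase_cons_tail s (Ne.symm hux), Multiset.cons_swap]

end NimMove

def nimOptions (s : Multiset ℕ) : Finset (Multiset ℕ) :=
  s.toFinset.biUnion fun h => (range h).image fun w => w ::ₘ s.erase h

lemma mem_nimOptions {s t : Multiset ℕ} : t ∈ nimOptions s ↔ NimMove s t := by
  simp [nimOptions, NimMove, eq_comm]

lemma card_nimOptions_le (s : Multiset ℕ) : #(nimOptions s) ≤ s.sum := by
  have hdedup : ∑ h ∈ s.toFinset, h ≤ s.sum := by
    obtain ⟨u, hu⟩ := Multiset.le_iff_exists_add.1 (Multiset.dedup_le s)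
    calc ∑ h ∈ s.toFinset, h = s.dedup.sum := by simp [Finset.sum_eq_multiset_sum]
      _ ≤ s.dedup.sum + u.sum := Nat.le_add_right _ _
      _ = s.sum := by rw [← Multiset.sum_add, ← hu]
  calc #(nimOptions s)
      ≤ ∑ h ∈ s.toFinset, #((range h).image fun w => w ::ₘ s.erase h) := card_biUnion_le
    _ ≤ ∑ h ∈ s.toFinset, h := sum_le_sum fun h _ => card_image_le.trans (card_range h).le
    _ ≤ s.sum := hdedup

section PPos

variable (F : Finset (Multiset ℕ))

lemma subsingleton_pPos_cons (s : Multiset ℕ) : {x | PPos F (x ::ₘ s)}.Subsingleton := by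
  intro x hx x' hx'
  by_contra hne
  wlog hlt : x < x' generalizing x x'
  · exact this hx' hx (Ne.symm hne) (lt_of_le_of_ne (not_lt.1 hlt) (Ne.symm hne))
  exact (nimP_iff F _).1 hx'.2 _ (NimMove.cons_of_lt s hlt) hx.1 hx.2

lemma exists_pPos_cons_le (s : Multiset ℕ) : ∃ x ≤ s.sum + #F, PPos F (x ::ₘ s) := by
  classical
  by_contra! hnone
  set good := {x ∈ range (s.sum + #F + 1) | x ::ₘ s ∉ F}
  have hgood : s.sum + 1 ≤ #good := by
    have hbad : #{x ∈ range (s.sum + #F + 1) | x ::ₘ s ∈ F} ≤ #F :=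
      card_le_card_of_injOn (· ::ₘ s) (fun x hx => (mem_filter.1 hx).2)
        fun a _ b _ hab => (Multiset.cons_inj_left s).1 hab
    have hsplit : #{x ∈ range (s.sum + #F + 1) | x ::ₘ s ∈ F} + #good = s.sum + #F + 1 :=
      (card_filter_add_card_filter_not fun x => x ::ₘ s ∈ F).trans (card_range _)
    omega
  -- a winning move from `x ::ₘ s` cannot lower `x`, since no smaller `w ::ₘ s` is a P-position
  have hmove : ∀ x ∈ good, ∃ t, NimMove s t ∧ PPos F (x ::ₘ t) := by
    intro x hx
    obtain ⟨hxB, hxF⟩ := mem_filter.1 hx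
    rw [mem_range] at hxB
    have hN : ¬ NimP F (x ::ₘ s) := fun hP => hnone x (by omega) ⟨hxF, hP⟩
    rw [nimP_iff] at hN
    push Not at hN
    obtain ⟨b, hmv, hbF, hbP⟩ := hN
    rcases hmv.of_cons with ⟨w, hw, rfl⟩ | ⟨t, ht, rfl⟩
    · exact absurd ⟨hbF, hbP⟩ (hnone w (by omega))
    · exact ⟨t, ht, hbF, hbP⟩
  choose! opt hopt hoptP using hmove
  have hinj : Set.InjOn opt good := fun x hx x' hx' h =>
    subsingleton_pPos_cons F _ (hoptP x hx) (h ▸ hoptP x' hx')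
  have := card_le_card_of_injOn opt (fun x hx => mem_nimOptions.2 (hopt x hx)) hinj
  have := card_nimOptions_le s
  omega

end PPos

lemma card_le_of_forall_pair_le {α : Type*} [DecidableEq α] (t : Multiset α) (S : Finset (α × α))
    (hS : ∀ p ∈ S, p.1 ::ₘ {p.2} ≤ t) : #S ≤ t.card * (t.card - 1) := by
  have hsub : S ⊆ t.toFinset.biUnion fun a => (t.erase a).toFinset.image (Prod.mk a) := by
    intro p hp
    have h1 : p.1 ∈ t := Multiset.mem_of_le (hS p hp) (Multiset.mem_cons_self _ _)
    have h2 : p.2 ∈ t.erase p.1 := by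
      have := Multiset.erase_le_erase p.1 (hS p hp)
      rw [Multiset.erase_cons_head] at this
      exact Multiset.mem_of_le this (Multiset.mem_singleton_self _)
    exact mem_biUnion.2 ⟨p.1, Multiset.mem_toFinset.2 h1,
      mem_image.2 ⟨p.2, Multiset.mem_toFinset.2 h2, rfl⟩⟩
  calc #S ≤ ∑ a ∈ t.toFinset, #((t.erase a).toFinset.image (Prod.mk a)) :=
        (card_le_card hsub).trans card_biUnion_le
    _ ≤ ∑ _a ∈ t.toFinset, (t.card - 1) := by
        refine sum_le_sum fun a ha => card_image_le.trans ?_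
        rw [Nat.sub_one, ← Multiset.card_erase_of_mem (Multiset.mem_toFinset.1 ha)]
        exact Multiset.toFinset_card_le _
    _ ≤ t.card * (t.card - 1) := by
        rw [sum_const, smul_eq_mul]
        exact Nat.mul_le_mul_right _ (Multiset.toFinset_card_le t)

lemma finite_setOf_card_eq_forall_lt (k n : ℕ) :
    {s : Multiset ℕ | s.card = k ∧ ∀ a ∈ s, a < n}.Finite :=
  (((range n).sym k).finite_toSet.image Subtype.val).subset fun s ⟨hk, hs⟩ =>
    ⟨⟨s, hk⟩, mem_sym_iff.2 fun a ha => mem_range.2 (hs a ha), rfl⟩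

lemma mul_self_le_six_mul_piNim (F : Finset (Multiset ℕ)) {m n : ℕ} (h : 2 * m + #F ≤ n + 1) :
    m * m ≤ 6 * piNim F n := by
  classical
  choose x hxle hxP using fun y z : ℕ => exists_pPos_cons_le F (y ::ₘ {z})
  set f : ℕ × ℕ → Multiset ℕ := fun p => x p.1 p.2 ::ₘ p.1 ::ₘ {p.2}
  set pairs := range m ×ˢ range m
  have hmaps : ∀ p ∈ pairs, f p ∈ {s : Multiset ℕ | s.card = 3 ∧ (∀ a ∈ s, a < n) ∧ PPos F s} := by
    rintro ⟨y, z⟩ hp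
    simp only [pairs, mem_product, mem_range] at hp
    have hx := hxle y z
    simp only [Multiset.sum_cons, Multiset.sum_singleton] at hx
    refine ⟨by simp [f], ?_, hxP y z⟩
    simp only [f, Multiset.mem_cons, Multiset.mem_singleton]
    rintro a (rfl | rfl | rfl) <;> omega
  have himage : #(pairs.image f) ≤ piNim F n := by
    rw [← Set.ncard_coe_finset]
    refine Set.ncard_le_ncard ?_ ((finite_setOf_card_eq_forall_lt 3 n).subset fun s hs => ⟨hs.1, hs.2.1⟩)
    rw [coe_image]
    exact Set.image_subset_iff.2 hmaps
  have hfiber : ∀ t ∈ pairs.image f, #{p ∈ pairs | f p = t} ≤ 6 := by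
    intro t ht
    obtain ⟨p, -, rfl⟩ := mem_image.1 ht
    have := card_le_of_forall_pair_le (f p) {q ∈ pairs | f q = f p} fun q hq =>
      (mem_filter.1 hq).2 ▸ Multiset.le_cons_self _ _
    simpa [f] using this
  calc m * m = #pairs := by simp [pairs]
    _ ≤ 6 * #(pairs.image f) := card_le_mul_card_image pairs 6 hfiber
    _ ≤ 6 * piNim F n := Nat.mul_le_mul_left 6 himage

lemma sq_sub_card_div_le_piNim (F : Finset (Multiset ℕ)) {n : ℕ} (hn : #F < n) :
    ((n : ℝ) - #F) ^ 2 / 24 ≤ piNim F n := by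
  set m := (n + 1 - #F) / 2
  have hcount : (m : ℝ) * m ≤ 6 * piNim F n := by
    exact_mod_cast mul_self_le_six_mul_piNim F (m := m) (by omega)
  have hm : (n : ℝ) ≤ 2 * m + #F := by exact_mod_cast (by omega : n ≤ 2 * m + #F)
  have h0 : (#F : ℝ) < n := by exact_mod_cast hn
  nlinarith

lemma le_of_tendsto_div_sq {f u : ℕ → ℕ} {c : ℕ} {a L : ℝ}
    (hf : ∀ N, c < N → a * ((N : ℝ) - c) ^ 2 ≤ f N) (hu : Tendsto u atTop atTop)
    (hL : Tendsto (fun k => (f (u k) : ℝ) / (u k : ℝ) ^ 2) atTop (𝓝 L)) : a ≤ L := by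
  have hu' : Tendsto (fun k => (u k : ℝ)) atTop atTop := tendsto_natCast_atTop_atTop.comp hu
  have hlim : Tendsto (fun k => a * (1 - c / (u k : ℝ)) ^ 2) atTop (𝓝 a) := by
    simpa using ((tendsto_const_nhds.div_atTop hu').const_sub 1 |>.pow 2).const_mul a
  refine le_of_tendsto_of_tendsto hlim hL ?_
  filter_upwards [hu.eventually_gt_atTop c] with k hk
  have hpos : (0 : ℝ) < u k := by exact_mod_cast (Nat.zero_le c).trans_lt hk
  rw [one_sub_div hpos.ne', div_pow, ← mul_div_assoc]
  exact div_le_div_of_nonneg_right (hf _ hk) (sq_nonneg _)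

/-- Lower bound π(n) ≥ (n − |F|)²/24 for n > |F|; hence any scaling limit is ≥ 1/24. -/
theorem pi_lower_bound (F : Finset (Multiset ℕ)) :
    (∀ n : ℕ, n > F.card → ((n : ℝ) - F.card) ^ 2 / 24 ≤ (piNim F n : ℝ)) ∧
    ∀ n : ℕ, 0 < n → ∀ L : ℝ,
      Tendsto (fun k : ℕ => (piNim F (n * 2 ^ k) : ℝ) / ((n * 2 ^ k : ℕ) : ℝ) ^ 2)
        atTop (nhds L) →
      1 / 24 ≤ L := by
  refine ⟨fun n hn => sq_sub_card_div_le_piNim F hn, fun n hn L hL => ?_⟩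
  have hscale : Tendsto (fun k : ℕ => n * 2 ^ k) atTop atTop :=
    (tendsto_pow_atTop_atTop_of_one_lt one_lt_two).const_mul_atTop' hn
  refine le_of_tendsto_div_sq (c := #F) (fun N (hN : #F < N) => ?_) hscale hL
  have := sq_sub_card_div_le_piNim F hN
  linarith
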